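/- Let G be a strong quasi-n-partite graph and I(G) ⊂ T its edge ideal. Then the integral closure I(G)̄ has linear quotients: there is an ordering f_1,…,f_q of the minimal monomial generators of I(G)̄ such that for each 2 ≤ j ≤ q the colon ideal (f_1,…,f_{j-1}) : (f_j) is generated by a subset of the variables of T. -/

import Mathlib

open MvPolynomial

/-- `f` is integral over the ideal `I`: it satisfies an equation
`f^k + c₁ f^(k-1) + ⋯ + c_k = 0` with `c_j ∈ I^j`. -/
def Ideal.IsIntegralElemOver {R : Type*} [CommRing R] (I : Ideal R) (f : R) : Prop :=
  ∃ k : ℕ, 0 < k ∧ ∃ c : ℕ → R, (∀ j, 1 ≤ j → j ≤ k → c j ∈ I ^ j) ∧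
    f ^ k + ∑ j ∈ Finset.Icc 1 k, c j * f ^ (k - j) = 0

/-- The integral closure of an ideal `I`, the ideal of all elements integral over `I`. -/
def Ideal.intClosure {R : Type*} [CommRing R] (I : Ideal R) : Ideal R :=
  Ideal.span {f | I.IsIntegralElemOver f}

/-- The edge ideal of the strong quasi-`n`-partite graph: the complete `n`-partite graph
on `V₁ ∪ ⋯ ∪ Vₙ`, `Vᵢ = {x_{i1}, …, x_{im_i}}`, with a loop at every vertex; it is
generated by the `x_{ih} x_{i'h'}` with `i ≠ i'` and the `x_{ih}²`. -/
noncomputable def edgeIdealSQ (K : Type*) [Field K] (n : ℕ) (m : Fin n → ℕ) :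
    Ideal (MvPolynomial (Σ i : Fin n, Fin (m i)) K) :=
  Ideal.span
    ({f | ∃ (i i' : Fin n) (h : Fin (m i)) (h' : Fin (m i')),
        i ≠ i' ∧ f = X ⟨i, h⟩ * X ⟨i', h'⟩} ∪
     {f | ∃ (i : Fin n) (h : Fin (m i)), f = X ⟨i, h⟩ ^ 2})

/-!
Write `𝔪` for the ideal generated by the variables. The integral closure of `I(G)` is `𝔪²`:
every `x_u x_v` is integral over `I(G)` since `(x_u x_v)² = x_u² x_v² ∈ I(G)²`, and conversely
`𝔪^s` is integrally closed because the order (lowest degree of a monomial) of a polynomial over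
a domain is additive, so an equation `f^k = -∑ c_j f^(k-j)` with `c_j ∈ 𝔪^(s j)` forces
`ord f ≥ s`. Listing the monomials `x_a x_b` (`a ≤ b`) of `𝔪²` lexicographically by `(b, a)`,
the colon ideal of the earlier ones by `x_a x_b` is generated by the variables `x_c` with `c < b`.
-/

theorem Ideal.isIntegralElemOver_of_pow_mem_pow {R : Type*} [CommRing R] {I : Ideal R} {f : R}
    {k : ℕ} (hk : 0 < k) (h : f ^ k ∈ I ^ k) : I.IsIntegralElemOver f := by
  refine ⟨k, hk, fun j => if j = k then -f ^ k else 0, fun j _ _ => ?_, ?_⟩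
  · dsimp only
    split_ifs with hj
    · subst hj; exact neg_mem h
    · exact zero_mem _
  · simp [Finset.sum_ite_eq', Nat.one_le_iff_ne_zero.mpr hk.ne']

namespace MvPolynomial
variable {σ R : Type*} [CommRing R]

theorem mem_pow_idealOfVars_iff_le_order (s : ℕ) (p : MvPolynomial σ R) :
    p ∈ idealOfVars σ R ^ s ↔ (s : ℕ∞) ≤ (p : MvPowerSeries σ R).order := by
  rw [mem_pow_idealOfVars_iff']
  refine ⟨fun h => MvPowerSeries.nat_le_order fun d hd => by rw [coeff_coe]; exact h d hd,
    fun h d hd => ?_⟩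
  rw [← coeff_coe]
  exact MvPowerSeries.coeff_of_lt_order (lt_of_lt_of_le (by exact_mod_cast hd) h)

theorem order_coe_pow [IsDomain R] (p : MvPolynomial σ R) (k : ℕ) :
    ((p ^ k : MvPolynomial σ R) : MvPowerSeries σ R).order =
      k * (p : MvPowerSeries σ R).order := by
  induction k with
  | zero =>
    rw [pow_zero, coe_one, Nat.cast_zero, zero_mul]
    exact MvPowerSeries.weightedOrder_one _
  | succ k ih => rw [pow_succ, coe_mul, MvPowerSeries.order_mul, ih]; push_cast; ring

theorem mem_pow_idealOfVars_of_isIntegralElemOver [IsDomain R] {s : ℕ}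
    {I : Ideal (MvPolynomial σ R)} (hI : I ≤ idealOfVars σ R ^ s) {p : MvPolynomial σ R}
    (hp : I.IsIntegralElemOver p) : p ∈ idealOfVars σ R ^ s := by
  rw [mem_pow_idealOfVars_iff_le_order]
  by_contra! hlt
  obtain ⟨t, ht⟩ := ENat.ne_top_iff_exists.mp (ne_top_of_lt hlt)
  have hts : t < s := by rw [← ht] at hlt; exact_mod_cast hlt
  have hpt : p ∈ idealOfVars σ R ^ t := by rw [mem_pow_idealOfVars_iff_le_order, ← ht]
  obtain ⟨k, hk, c, hc, heq⟩ := hp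
  have hterm : ∀ j ∈ Finset.Icc 1 k, c j * p ^ (k - j) ∈ idealOfVars σ R ^ (t * k + 1) := by
    intro j hj
    obtain ⟨hj1, hjk⟩ := Finset.mem_Icc.mp hj
    have hcj : c j ∈ idealOfVars σ R ^ (s * j) := by
      rw [pow_mul]; exact Ideal.pow_right_mono hI j (hc j hj1 hjk)
    have hpow : p ^ (k - j) ∈ idealOfVars σ R ^ (t * (k - j)) := by
      rw [pow_mul]; exact Ideal.pow_mem_pow hpt _
    refine Ideal.pow_le_pow_right ?_ (pow_add (idealOfVars σ R) _ _ ▸ Ideal.mul_mem_mul hcj hpow)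
    obtain ⟨i, rfl⟩ := Nat.exists_eq_add_of_le hjk
    rw [Nat.add_sub_cancel_left]
    nlinarith
  have hpk : p ^ k ∈ idealOfVars σ R ^ (t * k + 1) := by
    rw [eq_neg_of_add_eq_zero_left heq]
    exact neg_mem (Ideal.sum_mem _ hterm)
  rw [mem_pow_idealOfVars_iff_le_order, order_coe_pow, ← ht] at hpk
  norm_cast at hpk
  rw [mul_comm] at hpk
  omega

theorem intClosure_le_pow_idealOfVars [IsDomain R] {s : ℕ} {I : Ideal (MvPolynomial σ R)}
    (hI : I ≤ idealOfVars σ R ^ s) : I.intClosure ≤ idealOfVars σ R ^ s :=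
  Ideal.span_le.mpr fun _ hp => mem_pow_idealOfVars_of_isIntegralElemOver hI hp

theorem idealOfVars_sq_eq_span :
    idealOfVars σ R ^ 2 = Ideal.span (Set.range fun uv : σ × σ => X uv.1 * X uv.2) := by
  rw [sq, Ideal.span_mul_span']
  congr 1
  ext g
  simp [Set.mem_mul]

end MvPolynomial

section EdgeIdeal
variable {K : Type*} [Field K] {n : ℕ} {m : Fin n → ℕ}

theorem edgeIdealSQ_le_sq_idealOfVars : edgeIdealSQ K n m ≤ idealOfVars _ K ^ 2 := by
  rw [edgeIdealSQ, Ideal.span_le, idealOfVars_sq_eq_span]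
  rintro _ (⟨i, i', h, h', -, rfl⟩ | ⟨i, h, rfl⟩)
  · exact Ideal.subset_span ⟨(⟨i, h⟩, ⟨i', h'⟩), rfl⟩
  · exact Ideal.subset_span ⟨(⟨i, h⟩, ⟨i, h⟩), (sq _).symm⟩

theorem intClosure_edgeIdealSQ : (edgeIdealSQ K n m).intClosure = idealOfVars _ K ^ 2 := by
  refine le_antisymm (intClosure_le_pow_idealOfVars edgeIdealSQ_le_sq_idealOfVars) ?_
  have hsq (u : Σ i : Fin n, Fin (m i)) : (X u : MvPolynomial _ K) ^ 2 ∈ edgeIdealSQ K n m :=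
    Ideal.subset_span (Or.inr ⟨u.1, u.2, rfl⟩)
  rw [idealOfVars_sq_eq_span, Ideal.span_le]
  rintro _ ⟨⟨u, v⟩, rfl⟩
  refine Ideal.subset_span (Ideal.isIntegralElemOver_of_pow_mem_pow two_pos ?_)
  rw [mul_pow, sq (edgeIdealSQ K n m)]
  exact Ideal.mul_mem_mul (hsq u) (hsq v)

end EdgeIdeal

namespace MvPolynomial
variable {σ R : Type*} [CommRing R]

structure IsLinearQuotientOrder {ι : Type*} [LinearOrder ι] (I : Ideal (MvPolynomial σ R))
    (f : ι → MvPolynomial σ R) : Prop where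
  exists_eq_monomial : ∀ j, ∃ a, f j = monomial a 1
  eq_span_range : I = Ideal.span (Set.range f)
  notMem_span : ∀ j, f j ∉ Ideal.span (f '' {j' | j' ≠ j})
  totalDegree_monotone : Monotone fun j => (f j).totalDegree
  colon_eq : ∀ j, ∃ V : Set σ,
    (Ideal.span (f '' Set.Iio j)).colon (Ideal.span {f j}) = Ideal.span (X '' V)

theorem IsLinearQuotientOrder.comp_orderIso {ι κ : Type*} [LinearOrder ι] [LinearOrder κ]
    {I : Ideal (MvPolynomial σ R)} {f : ι → MvPolynomial σ R} (hf : IsLinearQuotientOrder I f)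
    (e : κ ≃o ι) : IsLinearQuotientOrder I (f ∘ e) where
  exists_eq_monomial j := hf.exists_eq_monomial (e j)
  eq_span_range := by rw [EquivLike.range_comp]; exact hf.eq_span_range
  notMem_span j := by
    have : (f ∘ e) '' {j' | j' ≠ j} = f '' {i | i ≠ e j} := by
      rw [Set.image_comp, e.image_eq_preimage_symm]
      congr 1; ext i; simp [e.symm_apply_eq]
    rw [this]; exact hf.notMem_span (e j)
  totalDegree_monotone := hf.totalDegree_monotone.comp e.monotone
  colon_eq j := by
    rw [Set.image_comp, e.image_Iio]; exact hf.colon_eq (e j)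

end MvPolynomial

/-- `(b, a)` with `a ≤ b` stands for the monomial `x_a x_b`; the lexicographic order on these
pairs is the linear-quotient order of `𝔪²`. -/
abbrev SortedPair (σ : Type*) [LinearOrder σ] := {p : σ ×ₗ σ // (ofLex p).2 ≤ (ofLex p).1}

namespace SortedPair
variable {σ : Type*} [LinearOrder σ]

def hi (p : SortedPair σ) : σ := (ofLex p.1).1

def lo (p : SortedPair σ) : σ := (ofLex p.1).2

theorem lo_le_hi (p : SortedPair σ) : p.lo ≤ p.hi := p.2

def ofPair (u v : σ) : SortedPair σ := ⟨toLex (max u v, min u v), min_le_max⟩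

@[simp] theorem hi_ofPair (u v : σ) : (ofPair u v).hi = max u v := rfl

@[simp] theorem lo_ofPair (u v : σ) : (ofPair u v).lo = min u v := rfl

theorem lt_iff {p p' : SortedPair σ} : p < p' ↔ p.hi < p'.hi ∨ p.hi = p'.hi ∧ p.lo < p'.lo :=
  Prod.Lex.lt_iff

theorem eq_of_hi_eq_of_lo_eq {p p' : SortedPair σ} (hhi : p.hi = p'.hi) (hlo : p.lo = p'.lo) :
    p = p' :=
  Subtype.ext (ofLex.injective (Prod.ext hhi hlo))

noncomputable def exponent (p : SortedPair σ) : σ →₀ ℕ :=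
  Finsupp.single p.lo 1 + Finsupp.single p.hi 1

theorem exponent_apply (p : SortedPair σ) (w : σ) :
    p.exponent w = (if p.lo = w then 1 else 0) + (if p.hi = w then 1 else 0) := by
  rw [exponent, Finsupp.add_apply, Finsupp.single_apply, Finsupp.single_apply]

theorem ofPair_lo_lt {p : SortedPair σ} {c : σ} (hc : c < p.hi) : ofPair p.lo c < p := by
  have := p.lo_le_hi
  rw [lt_iff, hi_ofPair, lo_ofPair]
  grind

theorem eq_of_exponent_le {p p' : SortedPair σ} (h : p'.exponent ≤ p.exponent) : p' = p := by
  have h1 := h p'.lo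
  have h2 := h p'.hi
  rw [exponent_apply, exponent_apply] at h1 h2
  have := p.lo_le_hi
  have := p'.lo_le_hi
  exact eq_of_hi_eq_of_lo_eq (by grind) (by grind)

theorem exists_lt_hi_of_exponent_le {p p' : SortedPair σ} (hlt : p' < p) {d : σ →₀ ℕ}
    (hle : p'.exponent ≤ d + p.exponent) : ∃ c < p.hi, d c ≠ 0 := by
  have h1 := hle p'.lo
  have h2 := hle p'.hi
  rw [Finsupp.add_apply, exponent_apply, exponent_apply] at h1 h2
  have := p.lo_le_hi
  have := p'.lo_le_hi
  rw [lt_iff] at hlt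
  by_cases hlo : p.lo = p'.lo
  · exact ⟨p'.hi, by grind, by grind⟩
  · exact ⟨p'.lo, by grind, by grind⟩

variable (K : Type*) [CommRing K]

noncomputable def gen (p : SortedPair σ) : MvPolynomial σ K := monomial p.exponent 1

variable {K}

theorem gen_eq_X_mul_X (p : SortedPair σ) : gen K p = X p.lo * X p.hi := by
  rw [gen, exponent, X, X, monomial_mul, one_mul]

theorem gen_ofPair (u v : σ) : gen K (ofPair u v) = X u * X v := by
  rw [gen_eq_X_mul_X, lo_ofPair, hi_ofPair]
  rcases le_total u v with h | h
  · rw [min_eq_left h, max_eq_right h]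
  · rw [min_eq_right h, max_eq_left h, mul_comm]

theorem gen_ne_zero [Nontrivial K] (p : SortedPair σ) : gen K p ≠ 0 := by
  simp [gen]

theorem totalDegree_gen [Nontrivial K] (p : SortedPair σ) : (gen K p).totalDegree = 2 := by
  have := (isHomogeneous_X K p.lo).mul (isHomogeneous_X K p.hi)
  rw [← gen_eq_X_mul_X] at this
  exact this.totalDegree (gen_ne_zero p)

theorem span_range_gen :
    Ideal.span (Set.range (gen K : SortedPair σ → _)) = idealOfVars σ K ^ 2 := by
  rw [idealOfVars_sq_eq_span]
  apply le_antisymm <;> rw [Ideal.span_le]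
  · rintro _ ⟨p, rfl⟩
    exact Ideal.subset_span ⟨(p.lo, p.hi), (gen_eq_X_mul_X p).symm⟩
  · rintro _ ⟨⟨u, v⟩, rfl⟩
    exact Ideal.subset_span ⟨ofPair u v, gen_ofPair u v⟩

theorem image_gen (s : Set (SortedPair σ)) :
    gen K '' s = (fun e => monomial e (1 : K)) '' (exponent '' s) :=
  Set.image_comp (fun e => monomial e (1 : K)) exponent s

theorem gen_notMem_span [Nontrivial K] (p : SortedPair σ) :
    gen K p ∉ Ideal.span (gen K '' {p' | p' ≠ p}) := by
  rw [image_gen, mem_ideal_span_monomial_image]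
  intro h
  obtain ⟨_, ⟨p', hp', rfl⟩, hle⟩ := h p.exponent (by simp [gen])
  exact hp' (eq_of_exponent_le hle)

theorem colon_gen_eq (p : SortedPair σ) :
    (Ideal.span (gen K '' Set.Iio p)).colon (Ideal.span {gen K p}) =
      Ideal.span (X '' Set.Iio p.hi) := by
  apply le_antisymm
  · intro g hg
    rw [Ideal.mem_colon_span_singleton, image_gen, mem_ideal_span_monomial_image] at hg
    rw [mem_ideal_span_X_image]
    intro d hd
    have hmem : d + p.exponent ∈ (g * gen K p).support := by
      rwa [mem_support_iff, gen, coeff_mul_monomial, mul_one, ← mem_support_iff]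
    obtain ⟨_, ⟨p', hp', rfl⟩, hle⟩ := hg _ hmem
    exact exists_lt_hi_of_exponent_le hp' hle
  · rw [Ideal.span_le]
    rintro _ ⟨c, hc, rfl⟩
    rw [SetLike.mem_coe, Ideal.mem_colon_span_singleton]
    have hfactor : X c * gen K p = gen K (ofPair p.lo c) * X p.hi := by
      rw [gen_ofPair, gen_eq_X_mul_X]; ring
    rw [hfactor]
    exact Ideal.mul_mem_right _ _ (Ideal.subset_span ⟨_, ofPair_lo_lt hc, rfl⟩)

theorem isLinearQuotientOrder_gen [Nontrivial K] :
    IsLinearQuotientOrder (idealOfVars σ K ^ 2) (gen K : SortedPair σ → _) where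
  exists_eq_monomial p := ⟨p.exponent, rfl⟩
  eq_span_range := span_range_gen.symm
  notMem_span := gen_notMem_span
  totalDegree_monotone p p' _ := (totalDegree_gen p).trans_le (totalDegree_gen p').ge
  colon_eq p := ⟨_, colon_gen_eq p⟩

end SortedPair

theorem MvPolynomial.exists_isLinearQuotientOrder_sq_idealOfVars (σ K : Type*) [Fintype σ]
    [CommRing K] [Nontrivial K] :
    ∃ (q : ℕ) (f : Fin q → MvPolynomial σ K), IsLinearQuotientOrder (idealOfVars σ K ^ 2) f := by
  let _ : LinearOrder σ := LinearOrder.lift' _ (Fintype.equivFin σ).injective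
  exact ⟨_, _, SortedPair.isLinearQuotientOrder_gen.comp_orderIso (monoEquivOfFin _ rfl)⟩

theorem stmt7_general {K : Type*} [Field K] (n : ℕ) (m : Fin n → ℕ) :
    ∃ (q : ℕ) (f : Fin q → MvPolynomial (Σ i : Fin n, Fin (m i)) K),
      (∀ j, ∃ a : (Σ i : Fin n, Fin (m i)) →₀ ℕ, f j = monomial a (1 : K)) ∧
      (edgeIdealSQ K n m).intClosure = Ideal.span (Set.range f) ∧
      (∀ j : Fin q, f j ∉ Ideal.span (f '' {j' | j' ≠ j})) ∧
      (∀ j j' : Fin q, j ≤ j' → (f j).totalDegree ≤ (f j').totalDegree) ∧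
      (∀ j : Fin q, 0 < j.1 →
        ∃ V : Set (Σ i : Fin n, Fin (m i)),
          (Ideal.span (f '' {j' | j'.1 < j.1})).colon (Ideal.span {f j}) =
            Ideal.span (X '' V)) := by
  obtain ⟨q, f, hf⟩ := exists_isLinearQuotientOrder_sq_idealOfVars (Σ i : Fin n, Fin (m i)) K
  exact ⟨q, f, hf.exists_eq_monomial, intClosure_edgeIdealSQ.trans hf.eq_span_range,
    hf.notMem_span, fun _ _ h => hf.totalDegree_monotone h, fun j _ => hf.colon_eq j⟩

/-- The integral closure of the edge ideal of a strong quasi-`n`-partite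
graph has linear quotients: there is an ordering `f₁, …, f_q` of its minimal monomial
generators, with nondecreasing degrees, such that each colon ideal
`(f₁, …, f_{j-1}) : (f_j)` is generated by a subset of the variables. -/
theorem stmt7 {K : Type*} [Field K] (n : ℕ) (hn : 1 ≤ n) (m : Fin n → ℕ)
    (hm : ∀ i, 1 ≤ m i) :
    ∃ (q : ℕ) (f : Fin q → MvPolynomial (Σ i : Fin n, Fin (m i)) K),
      (∀ j, ∃ a : (Σ i : Fin n, Fin (m i)) →₀ ℕ, f j = monomial a (1 : K)) ∧
      (edgeIdealSQ K n m).intClosure = Ideal.span (Set.range f) ∧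
      (∀ j : Fin q, f j ∉ Ideal.span (f '' {j' | j' ≠ j})) ∧
      (∀ j j' : Fin q, j ≤ j' → (f j).totalDegree ≤ (f j').totalDegree) ∧
      (∀ j : Fin q, 0 < j.1 →
        ∃ V : Set (Σ i : Fin n, Fin (m i)),
          (Ideal.span (f '' {j' | j'.1 < j.1})).colon (Ideal.span {f j}) =
            Ideal.span (X '' V)) :=
  stmt7_general n m
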